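/- For every u ∈ [−1,1] with |u| > u_x one has the strict inequality 𝒫_u(x,b,0) < 2𝒫(x,b). (There is a strict free-energy cost at λ = 0 for constrained overlaps outside [−u_x, u_x].) -/

import Mathlib

open MeasureTheory Real Set

/-- Second derivative of `ξ`. -/
noncomputable def xi2 (ξ : ℝ → ℝ) : ℝ → ℝ := deriv (deriv ξ)

/-- `d(q) = ∫_q^1 ξ''(s) x(s) ds`. -/
noncomputable def dFun (ξ x : ℝ → ℝ) (q : ℝ) : ℝ := ∫ s in q..1, xi2 ξ s * x s

/-- `φ_u(q) = d(u) + ((1-t)/(1+t))(d(q) - d(u))`. -/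
noncomputable def phiFun (ξ x : ℝ → ℝ) (t u q : ℝ) : ℝ :=
  dFun ξ x u + (1 - t) / (1 + t) * (dFun ξ x q - dFun ξ x u)

/-- The functional `T_u(x,b,λ)` of Proposition 2.1. -/
noncomputable def TFun (ξ x : ℝ → ℝ) (t b u lam : ℝ) : ℝ :=
  let η : ℝ := if 0 ≤ u then 1 else -1
  (1 / 2) * Real.log (b ^ 2 / (b ^ 2 - lam ^ 2))
    + (1 + t) / 2 * (∫ s in (0:ℝ)..|u|, xi2 ξ s / (b - η * lam - dFun ξ x s))
    + (1 - t) / 2 * (∫ s in (0:ℝ)..|u|, xi2 ξ s / (b + η * lam - phiFun ξ x t |u| s))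
    + (1 / 2) * (∫ s in |u|..(1:ℝ), xi2 ξ s / (b - lam - dFun ξ x s))
    + (1 / 2) * (∫ s in |u|..(1:ℝ), xi2 ξ s / (b + lam - dFun ξ x s))
    - lam * u + b - 1 - Real.log b - ∫ q in (0:ℝ)..1, xi2 ξ q * x q

/-- The two-dimensional Guerra functional `𝒫_u(x,b,λ)`. -/
noncomputable def GuerraP (ξ x : ℝ → ℝ) (t h b u lam : ℝ) : ℝ :=
  if 0 ≤ u then TFun ξ x t b u lam + h ^ 2 / (b - lam - dFun ξ x 0)
  else TFun ξ x t b u lam + h ^ 2 / (b - lam - phiFun ξ x t |u| 0)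

/-- The Crisanti–Sommers functional `𝒫(x,b)`. -/
noncomputable def CSFun (ξ x : ℝ → ℝ) (h b : ℝ) : ℝ :=
  (1 / 2) * (h ^ 2 / (b - dFun ξ x 0)
    + (∫ q in (0:ℝ)..1, xi2 ξ q / (b - dFun ξ x q))
    + b - 1 - Real.log b - ∫ q in (0:ℝ)..1, xi2 ξ q * x q)


/-!
At `λ = 0` the Guerra functional and twice the Crisanti–Sommers functional share every term
except two. On `[0, |u|]` the inner integral `∫ ξ''/(b - d)` is replaced, with weight `(1-t)/2`,
by `∫ ξ''/(b - φ_{|u|})`, and in the field term `d(0)` may be replaced by `φ_{|u|}(0)`. Since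
`φ_{|u|} - d = (2t/(1+t)) (d(|u|) - d)` and `d` is antitone, `φ_{|u|} ≤ d`, so both replacements
can only lower the value. Because `|u| > u_x`, `x` is positive just below `|u|`, hence `d` drops
strictly there and `φ_{|u|} < d` somewhere on `[0, |u|]`, which makes the first loss strict.
-/

theorem continuous_xi2 {ξ : ℝ → ℝ} (hξ : ContDiff ℝ 2 ξ) : Continuous (xi2 ξ) := by
  simpa [xi2, iteratedDeriv_succ] using hξ.continuous_iteratedDeriv' 2

theorem intervalIntegrable_xi2_mul {ξ x : ℝ → ℝ} (hξ : Continuous (xi2 ξ))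
    (hx : MonotoneOn x (Icc 0 1)) :
    IntervalIntegrable (fun s => xi2 ξ s * x s) volume 0 1 :=
  (MonotoneOn.intervalIntegrable (by rwa [uIcc_of_le zero_le_one])).continuousOn_mul
    hξ.continuousOn

theorem IntervalIntegrable.of_mem_Icc {f : ℝ → ℝ} {a b p q : ℝ}
    (hf : IntervalIntegrable f volume a b) (hp : p ∈ Icc a b) (hq : q ∈ Icc a b) :
    IntervalIntegrable f volume p q :=
  hf.mono_set (uIcc_subset_uIcc (Icc_subset_uIcc hp) (Icc_subset_uIcc hq))

section dFun

variable {ξ x : ℝ → ℝ}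

theorem antitoneOn_dFun (hg : IntervalIntegrable (fun s => xi2 ξ s * x s) volume 0 1)
    (hg0 : ∀ s ∈ Ioc 0 1, 0 ≤ xi2 ξ s * x s) : AntitoneOn (dFun ξ x) (Icc 0 1) := by
  intro p hp q hq hpq
  refine intervalIntegral.integral_mono_interval hpq hq.2 le_rfl ?_ ?_
  · exact (ae_restrict_mem measurableSet_Ioc).mono fun s hs => hg0 s ⟨hp.1.trans_lt hs.1, hs.2⟩
  · exact hg.of_mem_Icc hp (right_mem_Icc.2 zero_le_one)

theorem continuousOn_dFun (hg : IntervalIntegrable (fun s => xi2 ξ s * x s) volume 0 1) :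
    ContinuousOn (dFun ξ x) (Icc 0 1) := by
  have := intervalIntegral.continuousOn_primitive_interval_left
    ((intervalIntegrable_iff_integrableOn_Icc_of_le zero_le_one).mp hg |>.mono_set
      (uIcc_of_le zero_le_one).subset)
  rwa [uIcc_of_le zero_le_one] at this

theorem dFun_lt_dFun (hg : IntervalIntegrable (fun s => xi2 ξ s * x s) volume 0 1)
    (hg0 : ∀ s ∈ Ioc 0 1, 0 ≤ xi2 ξ s * x s) {c s v : ℝ}
    (hpos : ∀ r ∈ Ioo c v, 0 < xi2 ξ r * x r) (hs : 0 ≤ s) (hsv : s < v) (hcv : c < v)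
    (hv : v ≤ 1) : dFun ξ x v < dFun ξ x s := by
  have hs1 : s ∈ Icc (0:ℝ) 1 := ⟨hs, hsv.le.trans hv⟩
  have hv1 : v ∈ Icc (0:ℝ) 1 := ⟨hs.trans hsv.le, hv⟩
  have hm : max s c ∈ Icc (0:ℝ) 1 := ⟨hs.trans (le_max_left _ _), (max_lt hsv hcv).le.trans hv⟩
  have hsplit : dFun ξ x s - (∫ r in s..v, xi2 ξ r * x r) = dFun ξ x v :=
    intervalIntegral.integral_interval_sub_left (hg.of_mem_Icc hs1 (right_mem_Icc.2 zero_le_one))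
      (hg.of_mem_Icc hs1 hv1)
  have htail_pos : 0 < ∫ r in max s c..v, xi2 ξ r * x r :=
    intervalIntegral.intervalIntegral_pos_of_pos_on (hg.of_mem_Icc hm hv1)
      (fun r hr => hpos r ⟨(le_max_right s c).trans_lt hr.1, hr.2⟩) (max_lt hsv hcv)
  have htail_le : ∫ r in max s c..v, xi2 ξ r * x r ≤ ∫ r in s..v, xi2 ξ r * x r :=
    intervalIntegral.integral_mono_interval (le_max_left _ _) (max_lt hsv hcv).le le_rfl
      ((ae_restrict_mem measurableSet_Ioc).mono fun r hr => hg0 r ⟨hs.trans_lt hr.1, hr.2.trans hv⟩)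
      (hg.of_mem_Icc hs1 hv1)
  linarith

end dFun

section phiFun

variable {ξ x : ℝ → ℝ} {t u q : ℝ}

theorem phiFun_sub_dFun (ht : 0 ≤ t) :
    phiFun ξ x t u q - dFun ξ x q = 2 * t / (1 + t) * (dFun ξ x u - dFun ξ x q) := by
  unfold phiFun
  field_simp
  ring

theorem phiFun_le_dFun (ht : 0 ≤ t) (h : dFun ξ x u ≤ dFun ξ x q) :
    phiFun ξ x t u q ≤ dFun ξ x q := by
  rw [← sub_nonpos, phiFun_sub_dFun ht]
  exact mul_nonpos_of_nonneg_of_nonpos (by positivity) (by linarith)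

theorem phiFun_lt_dFun (ht : 0 < t) (h : dFun ξ x u < dFun ξ x q) :
    phiFun ξ x t u q < dFun ξ x q := by
  rw [← sub_neg, phiFun_sub_dFun ht.le]
  exact mul_neg_of_pos_of_neg (by positivity) (by linarith)

theorem continuousOn_phiFun {s : Set ℝ} (hd : ContinuousOn (dFun ξ x) s) :
    ContinuousOn (phiFun ξ x t u) s :=
  continuousOn_const.add (continuousOn_const.mul (hd.sub continuousOn_const))

end phiFun

theorem integral_div_sub_lt_integral_div_sub {w f₁ f₂ : ℝ → ℝ} {a v b c : ℝ} (hav : a < v)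
    (hw : ContinuousOn w (Icc a v)) (hf₁ : ContinuousOn f₁ (Icc a v))
    (hf₂ : ContinuousOn f₂ (Icc a v)) (hw0 : ∀ s ∈ Ioc a v, 0 ≤ w s)
    (hle : ∀ s ∈ Icc a v, f₁ s ≤ f₂ s) (hb : ∀ s ∈ Icc a v, f₂ s < b)
    (hc : c ∈ Icc a v) (hwc : 0 < w c) (hlt : f₁ c < f₂ c) :
    ∫ s in a..v, w s / (b - f₁ s) < ∫ s in a..v, w s / (b - f₂ s) := by
  have hb₁ : ∀ s ∈ Icc a v, 0 < b - f₁ s := fun s hs => by linarith [hle s hs, hb s hs]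
  have hb₂ : ∀ s ∈ Icc a v, 0 < b - f₂ s := fun s hs => by linarith [hb s hs]
  refine intervalIntegral.integral_lt_integral_of_continuousOn_of_le_of_exists_lt hav
    (hw.div (continuousOn_const.sub hf₁) fun s hs => (hb₁ s hs).ne')
    (hw.div (continuousOn_const.sub hf₂) fun s hs => (hb₂ s hs).ne')
    (fun s hs => ?_) ⟨c, hc, ?_⟩
  · have hs' := Ioc_subset_Icc_self hs
    exact div_le_div_of_nonneg_left (hw0 s hs) (hb₂ s hs') (by linarith [hle s hs'])
  · exact div_lt_div_of_pos_left hwc (hb₂ c hc) (by linarith)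

theorem integral_div_sub_phiFun_lt {ξ x : ℝ → ℝ} {t b v c : ℝ} (ht : 0 < t) (hv : v ≤ 1)
    (hξ : Continuous (xi2 ξ)) (hξ_pos : ∀ s ∈ Ioc 0 1, 0 < xi2 ξ s)
    (hd_cont : ContinuousOn (dFun ξ x) (Icc 0 1)) (hd_anti : AntitoneOn (dFun ξ x) (Icc 0 1))
    (hd_lt : ∀ q ∈ Icc 0 1, dFun ξ x q < b) (hc : c ∈ Ioo 0 v)
    (hdc : dFun ξ x v < dFun ξ x c) :
    ∫ s in (0:ℝ)..v, xi2 ξ s / (b - phiFun ξ x t v s)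
      < ∫ s in (0:ℝ)..v, xi2 ξ s / (b - dFun ξ x s) := by
  have hsub : Icc 0 v ⊆ Icc (0:ℝ) 1 := Icc_subset_Icc le_rfl hv
  have hd_cont' := hd_cont.mono hsub
  refine integral_div_sub_lt_integral_div_sub (hc.1.trans hc.2) hξ.continuousOn
    (continuousOn_phiFun hd_cont') hd_cont' (fun s hs => (hξ_pos s ⟨hs.1, hs.2.trans hv⟩).le)
    (fun s hs => phiFun_le_dFun ht.le (hd_anti (hsub hs) (hsub ⟨hs.1.trans hs.2, le_rfl⟩) hs.2))
    (fun s hs => hd_lt s (hsub hs)) (Ioo_subset_Icc_self hc)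
    (hξ_pos c ⟨hc.1, hc.2.le.trans hv⟩) (phiFun_lt_dFun ht hdc)

theorem TFun_zero (ξ x : ℝ → ℝ) (t b u : ℝ) :
    TFun ξ x t b u 0 = (1 + t) / 2 * (∫ s in (0:ℝ)..|u|, xi2 ξ s / (b - dFun ξ x s))
      + (1 - t) / 2 * (∫ s in (0:ℝ)..|u|, xi2 ξ s / (b - phiFun ξ x t |u| s))
      + (∫ s in |u|..(1:ℝ), xi2 ξ s / (b - dFun ξ x s))
      + b - 1 - Real.log b - ∫ q in (0:ℝ)..1, xi2 ξ q * x q := by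
  simp only [TFun, mul_zero, sub_zero, add_zero, zero_mul]
  have : Real.log (b ^ 2 / b ^ 2) = 0 := by
    rcases eq_or_ne b 0 with rfl | hb
    · simp
    · rw [div_self (pow_ne_zero 2 hb), Real.log_one]
  simp only [ne_eq, OfNat.ofNat_ne_zero, not_false_eq_true, zero_pow, sub_zero, this]
  ring

theorem GuerraP_zero_le {ξ x : ℝ → ℝ} {t h b u : ℝ}
    (hφ : phiFun ξ x t |u| 0 ≤ dFun ξ x 0) (hb : dFun ξ x 0 < b) :
    GuerraP ξ x t h b u 0 ≤ TFun ξ x t b u 0 + h ^ 2 / (b - dFun ξ x 0) := by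
  unfold GuerraP
  split_ifs
  · simp
  · simp only [sub_zero, add_le_add_iff_left]
    exact div_le_div_of_nonneg_left (sq_nonneg h) (by linarith) (by linarith)

theorem guerra_lt_twice_CS_outside_general
    (ξ x : ℝ → ℝ) (h t b ux : ℝ)
    (hξ_smooth : ContDiff ℝ 3 ξ)
    (hξ'' : ∀ s ∈ Set.Ioc (0:ℝ) 1, 0 < xi2 ξ s)
    (hx_mono : MonotoneOn x (Set.Icc 0 1))
    (hx_mem : ∀ q ∈ Set.Icc (0:ℝ) 1, x q ∈ Set.Icc (0:ℝ) 1)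
    (hux_mem : ux ∈ Set.Icc (0:ℝ) 1)
    (hux_upper : ∀ q ∈ Set.Ioc ux 1, 0 < x q)
    (ht : t ∈ Set.Ioo (0:ℝ) 1)
    (hb : max 1 (∫ s in (0:ℝ)..1, xi2 ξ s * x s) < b) :
    ∀ u ∈ Set.Icc (-1:ℝ) 1, ux < |u| →
      GuerraP ξ x t h b u 0 < 2 * CSFun ξ x h b := by
  intro u hu hux
  have hv0 : 0 < |u| := hux_mem.1.trans_lt hux
  have hv1 : |u| ≤ 1 := abs_le.2 hu
  have hξc : Continuous (xi2 ξ) := continuous_xi2 (hξ_smooth.of_le (by norm_num))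
  have hg := intervalIntegrable_xi2_mul hξc hx_mono
  have hg0 : ∀ s ∈ Ioc (0:ℝ) 1, 0 ≤ xi2 ξ s * x s := fun s hs =>
    mul_nonneg (hξ'' s hs).le (hx_mem s (Ioc_subset_Icc_self hs)).1
  have hd_cont := continuousOn_dFun hg
  have hd_anti := antitoneOn_dFun hg hg0
  have hd_lt_b : ∀ q ∈ Icc (0:ℝ) 1, dFun ξ x q < b := fun q hq =>
    (hd_anti (left_mem_Icc.2 zero_le_one) hq hq.1).trans_lt
      ((le_max_right _ _).trans_lt hb)
  have hd_drop : dFun ξ x |u| < dFun ξ x (|u| / 2) :=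
    dFun_lt_dFun hg hg0 (c := ux) (fun r hr => mul_pos
      (hξ'' r ⟨hux_mem.1.trans_lt hr.1, hr.2.le.trans hv1⟩) (hux_upper r ⟨hr.1, hr.2.le.trans hv1⟩))
      (by positivity) (by linarith) hux hv1
  have hφ0 : phiFun ξ x t |u| 0 ≤ dFun ξ x 0 := phiFun_le_dFun ht.1.le
    (hd_anti (left_mem_Icc.2 zero_le_one) ⟨hv0.le, hv1⟩ hv0.le)
  have hint : IntervalIntegrable (fun s => xi2 ξ s / (b - dFun ξ x s)) volume 0 1 :=
    (hξc.continuousOn.div (continuousOn_const.sub hd_cont) fun s hs =>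
      (sub_pos.2 (hd_lt_b s hs)).ne').intervalIntegrable_of_Icc zero_le_one
  have hsplit := intervalIntegral.integral_add_adjacent_intervals
    (hint.of_mem_Icc (left_mem_Icc.2 zero_le_one) ⟨hv0.le, hv1⟩)
    (hint.of_mem_Icc ⟨hv0.le, hv1⟩ (right_mem_Icc.2 zero_le_one))
  have hBA := integral_div_sub_phiFun_lt ht.1 hv1 hξc hξ'' hd_cont hd_anti hd_lt_b
    ⟨by positivity, by linarith⟩ hd_drop
  have hG := GuerraP_zero_le (h := h) hφ0 (hd_lt_b 0 (left_mem_Icc.2 zero_le_one))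
  rw [TFun_zero] at hG
  have hcost := mul_lt_mul_of_pos_left hBA (by linarith [ht.2] : 0 < (1 - t) / 2)
  rw [CSFun, ← hsplit]
  linarith

/-- At `λ = 0`, for constrained overlaps outside `[-u_x, u_x]`, there is a strict
free-energy cost in the Guerra bound. -/
theorem guerra_lt_twice_CS_outside
    (ξ x : ℝ → ℝ) (h t b ux : ℝ)
    (hξ_even : ∀ s, ξ (-s) = ξ s)
    (hξ_smooth : ContDiff ℝ 3 ξ)
    (hξ'' : ∀ s ∈ Set.Ioc (0:ℝ) 1, 0 < xi2 ξ s)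
    (hξ''' : ∀ s ∈ Set.Icc (0:ℝ) 1, 0 ≤ deriv (xi2 ξ) s)
    (hx_mono : MonotoneOn x (Set.Icc 0 1))
    (hx_mem : ∀ q ∈ Set.Icc (0:ℝ) 1, x q ∈ Set.Icc (0:ℝ) 1)
    (hx_rc : ∀ q ∈ Set.Ico (0:ℝ) 1, ContinuousWithinAt x (Set.Ici q) q)
    (hx_one : x 1 = 1)
    (hux_mem : ux ∈ Set.Icc (0:ℝ) 1)
    (hux_lower : ∀ q ∈ Set.Ico (0:ℝ) ux, x q = 0)
    (hux_upper : ∀ q ∈ Set.Ioc ux 1, 0 < x q)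
    (ht : t ∈ Set.Ioo (0:ℝ) 1)
    (hb : max 1 (∫ s in (0:ℝ)..1, xi2 ξ s * x s) < b) :
    ∀ u ∈ Set.Icc (-1:ℝ) 1, ux < |u| →
      GuerraP ξ x t h b u 0 < 2 * CSFun ξ x h b :=
  guerra_lt_twice_CS_outside_general ξ x h t b ux hξ_smooth hξ'' hx_mono hx_mem hux_mem hux_upper ht
    hb
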